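/- (Agmon's inequality on the torus) There is a constant c > 0 such that for every u ∈ H²(𝕋³), Σ_{k∈ℤ³} |û(k)| ≤ c · ‖u‖_{H¹}^{1/2} · ‖u‖_{H²}^{1/2}. -/

import Mathlib

/-- Euclidean norm of a lattice point in ℤ³. -/
noncomputable def knorm (k : Fin 3 → ℤ) : ℝ := Real.sqrt (∑ i, ((k i : ℝ)) ^ 2)

namespace AgmonAux


lemma knorm_nonneg (k : Fin 3 → ℤ) : 0 ≤ knorm k := Real.sqrt_nonneg _

lemma knorm_sq (k : Fin 3 → ℤ) : knorm k ^ 2 = ∑ i, ((k i : ℝ)) ^ 2 := by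
  rw [knorm, Real.sq_sqrt]; positivity

noncomputable def box (N : ℕ) : Finset (Fin 3 → ℤ) := Finset.Icc (fun _ => -(N:ℤ)) (fun _ => (N:ℤ))

lemma mem_box {N : ℕ} {k : Fin 3 → ℤ} : k ∈ box N ↔ ∀ i, |k i| ≤ (N:ℤ) := by
  simp only [box, Finset.mem_Icc, Pi.le_def, abs_le, ← forall_and]

lemma card_box (N : ℕ) : (box N).card = (2*N+1)^3 := by
  rw [box, Pi.card_Icc]
  have : ∀ i : Fin 3, (Finset.Icc (-(N:ℤ)) (N:ℤ)).card = 2*N+1 := by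
    intro i; rw [Int.card_Icc]; omega
  simp [Int.card_Icc]
  omega

lemma box_subset {N M : ℕ} (h : N ≤ M) : box N ⊆ box M := by
  intro k hk
  rw [mem_box] at *
  intro i
  exact (hk i).trans (by exact_mod_cast h)

lemma knorm_sq_ge {N : ℕ} {k : Fin 3 → ℤ} (h : k ∉ box N) :
    ((N:ℝ)+1)^2 ≤ knorm k ^ 2 := by
  rw [knorm_sq]
  obtain ⟨i, hi⟩ : ∃ i, ¬ |k i| ≤ (N:ℤ) := by
    by_contra hc; push_neg at hc; exact h (mem_box.mpr hc)
  have h1 : ((N:ℤ)+1) ≤ |k i| := by omega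
  have h2 : ((N:ℝ)+1)^2 ≤ ((k i : ℝ))^2 := by
    have : ((N:ℝ)+1) ≤ |(k i : ℝ)| := by
      rw [← Int.cast_abs]; exact_mod_cast h1
    nlinarith [abs_nonneg ((k i : ℝ)), sq_abs ((k i):ℝ)]
  exact h2.trans (Finset.single_le_sum (f := fun j => ((k j : ℝ))^2) (fun j _ => sq_nonneg _) (Finset.mem_univ i))

lemma knorm_sq_pos {N : ℕ} {k : Fin 3 → ℤ} (h : k ∉ box N) : 0 < knorm k ^ 2 :=
  lt_of_lt_of_le (by positivity) (knorm_sq_ge h)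


lemma card_shell (N : ℕ) : ((box (N+1) \ box N).card : ℝ) = 24*N^2+48*N+26 := by
  have hsub := box_subset (Nat.le_succ N)
  have hc : (box (N+1) \ box N).card = (2*(N+1)+1)^3 - (2*N+1)^3 := by
    rw [Finset.card_sdiff_of_subset hsub, card_box, card_box]
  have he : (2*(N+1)+1)^3 = (2*N+1)^3 + (24*N^2+48*N+26) := by ring
  rw [hc, he]
  push_cast [Nat.add_sub_cancel_left]
  ring

lemma sum_low : ∀ N : ℕ, 1 ≤ N → ∑ k ∈ box N, (1 + knorm k ^ 2)⁻¹ ≤ 27*(N:ℝ) := by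
  intro N hN
  induction N, hN using Nat.le_induction with
  | base =>
    calc ∑ k ∈ box 1, (1 + knorm k ^ 2)⁻¹ ≤ ∑ k ∈ box 1, 1 := by
          apply Finset.sum_le_sum
          intro k _
          rw [inv_le_one_iff₀]
          right
          nlinarith [sq_nonneg (knorm k)]
      _ = ((box 1).card : ℝ) := by simp
      _ = 27 := by rw [card_box]; norm_num
      _ ≤ 27*((1:ℕ):ℝ) := by norm_num
  | succ N hN ih =>
    have hsub := box_subset (Nat.le_succ N)
    rw [← Finset.sum_sdiff hsub]
    have hshell : ∑ k ∈ box (N+1) \ box N, (1 + knorm k ^ 2)⁻¹ ≤ 26 := by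
      have hb : ∀ k ∈ box (N+1) \ box N, (1 + knorm k ^ 2)⁻¹ ≤ (1+((N:ℝ)+1)^2)⁻¹ := by
        intro k hk
        have hk' : k ∉ box N := (Finset.mem_sdiff.mp hk).2
        have := knorm_sq_ge hk'
        apply inv_anti₀ (by positivity)
        linarith
      calc ∑ k ∈ box (N+1) \ box N, (1 + knorm k ^ 2)⁻¹
          ≤ (box (N+1) \ box N).card • (1+((N:ℝ)+1)^2)⁻¹ :=
            Finset.sum_le_card_nsmul _ _ _ hb
        _ = (24*(N:ℝ)^2+48*N+26) * (1+((N:ℝ)+1)^2)⁻¹ := by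
            rw [nsmul_eq_mul, card_shell]
        _ ≤ 26 := by
            rw [mul_inv_le_iff₀ (by positivity)]
            nlinarith [sq_nonneg ((N:ℝ))]
    simp only [Nat.succ_eq_add_one] at *
    push_cast at ih ⊢
    linarith

lemma sum_high (N : ℕ) (hN : 1 ≤ N) : ∀ M, N ≤ M →
    ∑ k ∈ box M \ box N, ((knorm k ^ 2)⁻¹)^2 ≤ 26/(N:ℝ) - 26/(M:ℝ) := by
  intro M hM
  induction M, hM using Nat.le_induction with
  | base => simp
  | succ M hM ih =>
    have hNM : box N ⊆ box M := box_subset hM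
    have hMM : box M ⊆ box (M+1) := box_subset (Nat.le_succ M)
    have hsplit : ∑ k ∈ box (M+1) \ box N, ((knorm k ^ 2)⁻¹)^2
        = ∑ k ∈ box M \ box N, ((knorm k ^ 2)⁻¹)^2
          + ∑ k ∈ box (M+1) \ box M, ((knorm k ^ 2)⁻¹)^2 := by
      rw [Finset.sum_sdiff_eq_sub hNM, Finset.sum_sdiff_eq_sub hMM,
        Finset.sum_sdiff_eq_sub (hNM.trans hMM)]
      ring
    have hM0 : (0:ℝ) < M := by
      have : (1:ℝ) ≤ (M:ℝ) := by exact_mod_cast hN.trans hM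
      linarith
    have hshell : ∑ k ∈ box (M+1) \ box M, ((knorm k ^ 2)⁻¹)^2
        ≤ 26/(M:ℝ) - 26/((M:ℝ)+1) := by
      have hb : ∀ k ∈ box (M+1) \ box M, ((knorm k ^ 2)⁻¹)^2 ≤ ((((M:ℝ)+1)^2)⁻¹)^2 := by
        intro k hk
        have hk' : k ∉ box M := (Finset.mem_sdiff.mp hk).2
        have h1 := knorm_sq_ge hk'
        have h2 : (0:ℝ) < ((M:ℝ)+1)^2 := by positivity
        have h3 : (knorm k ^ 2)⁻¹ ≤ (((M:ℝ)+1)^2)⁻¹ := inv_anti₀ h2 h1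
        have h4 : 0 ≤ (knorm k ^2)⁻¹ := by positivity
        nlinarith
      calc ∑ k ∈ box (M+1) \ box M, ((knorm k ^ 2)⁻¹)^2
          ≤ (box (M+1) \ box M).card • ((((M:ℝ)+1)^2)⁻¹)^2 :=
            Finset.sum_le_card_nsmul _ _ _ hb
        _ = (24*(M:ℝ)^2+48*M+26) * ((((M:ℝ)+1)^2)⁻¹)^2 := by
            rw [nsmul_eq_mul, card_shell]
        _ ≤ 26/(M:ℝ) - 26/((M:ℝ)+1) := by
            have key : 26/(M:ℝ) - 26/((M:ℝ)+1) = 26/((M:ℝ)*((M:ℝ)+1)) := by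
              field_simp
              ring
            rw [key, inv_pow, mul_inv_le_iff₀ (by positivity), div_mul_eq_mul_div,
              le_div_iff₀ (by positivity)]
            nlinarith [sq_nonneg ((M:ℝ)), hM0]
    rw [hsplit]
    push_cast at ih ⊢
    linarith


lemma tsum_cs {ι : Type*} {g h : ι → ℝ} (hg : ∀ x, 0 ≤ g x) (hh : ∀ x, 0 ≤ h x)
    (Hg : Summable fun x => g x ^ 2) (Hh : Summable fun x => h x ^ 2) :
    (Summable fun x => g x * h x) ∧
    ∑' x, g x * h x ≤ Real.sqrt (∑' x, g x ^ 2) * Real.sqrt (∑' x, h x ^ 2) := by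
  have hsum : Summable fun x => g x * h x := by
    apply Summable.of_nonneg_of_le (fun x => mul_nonneg (hg x) (hh x))
      (fun x => ?_) ((Hg.add Hh).div_const 2)
    nlinarith [sq_nonneg (g x - h x)]
  refine ⟨hsum, Summable.tsum_le_of_sum_le hsum fun s => ?_⟩
  have h1 : (∑ i ∈ s, g i * h i)^2 ≤ (∑ i ∈ s, g i ^ 2) * (∑ i ∈ s, h i ^ 2) :=
    Finset.sum_mul_sq_le_sq_mul_sq s g h
  have h2 : ∑ i ∈ s, g i ^ 2 ≤ ∑' x, g x ^ 2 := Summable.sum_le_tsum s (fun i _ => sq_nonneg _) Hg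
  have h3 : ∑ i ∈ s, h i ^ 2 ≤ ∑' x, h x ^ 2 := Summable.sum_le_tsum s (fun i _ => sq_nonneg _) Hh
  have h4 : 0 ≤ ∑ i ∈ s, g i * h i :=
    Finset.sum_nonneg fun i _ => mul_nonneg (hg i) (hh i)
  have h5 : (0:ℝ) ≤ ∑ i ∈ s, g i ^ 2 := Finset.sum_nonneg fun i _ => sq_nonneg _
  have h6 : (0:ℝ) ≤ ∑' x, h x ^ 2 := tsum_nonneg fun _ => sq_nonneg _
  calc ∑ i ∈ s, g i * h i = Real.sqrt ((∑ i ∈ s, g i * h i)^2) := (Real.sqrt_sq h4).symm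
    _ ≤ Real.sqrt ((∑' x, g x ^ 2) * (∑' x, h x ^ 2)) := by
        apply Real.sqrt_le_sqrt
        calc (∑ i ∈ s, g i * h i)^2 ≤ (∑ i ∈ s, g i ^ 2) * (∑ i ∈ s, h i ^ 2) := h1
          _ ≤ (∑' x, g x ^ 2) * (∑' x, h x ^ 2) := by
              apply mul_le_mul h2 h3 (Finset.sum_nonneg fun i _ => sq_nonneg _)
                (tsum_nonneg fun _ => sq_nonneg _)
    _ = _ := Real.sqrt_mul (tsum_nonneg fun _ => sq_nonneg _) _

end AgmonAux

open AgmonAux in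
set_option maxHeartbeats 2000000 in
/-- Agmon's inequality on the torus, in Fourier form: there is c > 0 such that for every
u ∈ H²(𝕋³) (with Fourier coefficients û), Σ|û(k)| ≤ c ‖u‖_{H¹}^{1/2} ‖u‖_{H²}^{1/2},
where ‖u‖_{H^s}² = Σ (1+|k|^{2s}) |û(k)|². -/
theorem agmon_inequality_torus :
    ∃ c > (0:ℝ), ∀ uhat : (Fin 3 → ℤ) → ℂ,
      Summable (fun k => (1 + knorm k ^ 4) * ‖uhat k‖ ^ 2) →
      (∑' k, ‖uhat k‖) ≤
        c * Real.sqrt (Real.sqrt (∑' k, (1 + knorm k ^ 2) * ‖uhat k‖ ^ 2)) *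
          Real.sqrt (Real.sqrt (∑' k, (1 + knorm k ^ 4) * ‖uhat k‖ ^ 2)) := by
  classical
  refine ⟨Real.sqrt (27*(1+Real.sqrt 2)) + Real.sqrt 26, by positivity, ?_⟩
  intro uhat hS2
  have hw1le : ∀ k, (1 + knorm k ^ 2) * ‖uhat k‖ ^ 2
      ≤ 2 * ((1 + knorm k ^ 4) * ‖uhat k‖ ^ 2) := by
    intro k
    have h0 := knorm_nonneg k
    nlinarith [mul_nonneg (sq_nonneg ‖uhat k‖) (sq_nonneg (knorm k ^ 2 - 1)),
      mul_nonneg (sq_nonneg ‖uhat k‖) (pow_nonneg h0 4),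
      mul_nonneg (sq_nonneg ‖uhat k‖) (sq_nonneg (knorm k))]
  have hS1 : Summable fun k => (1 + knorm k ^ 2) * ‖uhat k‖ ^ 2 :=
    Summable.of_nonneg_of_le (fun k => by positivity) hw1le (hS2.mul_left 2)
  obtain ⟨T1, hT1def⟩ : ∃ x, x = ∑' k, (1 + knorm k ^ 2) * ‖uhat k‖ ^ 2 := ⟨_, rfl⟩
  obtain ⟨T2, hT2def⟩ : ∃ x, x = ∑' k, (1 + knorm k ^ 4) * ‖uhat k‖ ^ 2 := ⟨_, rfl⟩
  rw [← hT1def, ← hT2def]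
  have hT1nn : 0 ≤ T1 := hT1def ▸ tsum_nonneg fun k => by positivity
  have hT2nn : 0 ≤ T2 := hT2def ▸ tsum_nonneg fun k => by positivity
  have hT12 : T1 ≤ 2 * T2 := by
    rw [hT1def, hT2def]
    calc ∑' k, (1 + knorm k ^ 2) * ‖uhat k‖ ^ 2
        ≤ ∑' k, 2 * ((1 + knorm k ^ 4) * ‖uhat k‖ ^ 2) :=
          Summable.tsum_le_tsum hw1le hS1 (hS2.mul_left 2)
      _ = 2 * ∑' k, (1 + knorm k ^ 4) * ‖uhat k‖ ^ 2 := tsum_mul_left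
  rcases eq_or_lt_of_le hT1nn with hz | hpos
  · -- degenerate case : T1 = 0, all coefficients vanish
    have hfz : ∀ k, ‖uhat k‖ = 0 := by
      intro k
      by_contra hne
      have h1 : 0 < ‖uhat k‖ := lt_of_le_of_ne (norm_nonneg _) (Ne.symm hne)
      have h2 : 0 < (1 + knorm k ^ 2) * ‖uhat k‖ ^ 2 := by positivity
      have h3 : (1 + knorm k ^ 2) * ‖uhat k‖ ^ 2 ≤ T1 :=
        hT1def ▸ Summable.le_tsum hS1 k (fun j _ => by positivity)
      rw [← hz] at h3
      linarith
    have : (∑' k, ‖uhat k‖) = 0 := by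
      rw [tsum_congr hfz]; exact tsum_zero
    rw [this]
    positivity
  · -- main case
    obtain ⟨A, hAdef⟩ : ∃ x, x = Real.sqrt T1 := ⟨_, rfl⟩
    obtain ⟨B, hBdef⟩ : ∃ x, x = Real.sqrt T2 := ⟨_, rfl⟩
    rw [← hAdef, ← hBdef]
    have hA : 0 < A := hAdef ▸ Real.sqrt_pos.mpr hpos
    have hT2pos : 0 < T2 := by linarith
    have hB : 0 < B := hBdef ▸ Real.sqrt_pos.mpr hT2pos
    have hA2 : A ^ 2 = T1 := by rw [hAdef]; exact Real.sq_sqrt hT1nn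
    have hB2 : B ^ 2 = T2 := by rw [hBdef]; exact Real.sq_sqrt hT2nn
    have hAB : A ≤ Real.sqrt 2 * B := by
      rw [hAdef, hBdef]
      calc Real.sqrt T1 ≤ Real.sqrt (2 * T2) := Real.sqrt_le_sqrt hT12
        _ = Real.sqrt 2 * Real.sqrt T2 := Real.sqrt_mul (by norm_num) _
    obtain ⟨N, hNdef⟩ : ∃ n : ℕ, n = ⌈B / A⌉₊ := ⟨_, rfl⟩
    have hBA : 0 < B / A := div_pos hB hA
    have hN1 : 1 ≤ N := hNdef ▸ Nat.ceil_pos.mpr hBA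
    have hNposR : (0:ℝ) < N := by exact_mod_cast hN1
    have hNge : B / A ≤ (N:ℝ) := by rw [hNdef]; exact Nat.le_ceil _
    have hNle : (N:ℝ) ≤ (1 + Real.sqrt 2) * (B / A) := by
      have h1 : (1:ℝ) ≤ Real.sqrt 2 * (B / A) := by
        rw [mul_div_assoc'] at *
        exact (one_le_div hA).mpr hAB
      have h2 : (N:ℝ) < B / A + 1 := by rw [hNdef]; exact Nat.ceil_lt_add_one hBA.le
      nlinarith
    -- the complement of the box
    have hxmem : ∀ x : ↥(↑(box N) : Set (Fin 3 → ℤ))ᶜ, (x : Fin 3 → ℤ) ∉ box N := by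
      intro x
      exact fun hmem => x.property (Finset.mem_coe.mpr hmem)
    set g : ↥(↑(box N) : Set (Fin 3 → ℤ))ᶜ → ℝ := fun x => (knorm x ^ 2)⁻¹ with hgdef
    set h : ↥(↑(box N) : Set (Fin 3 → ℤ))ᶜ → ℝ := fun x => knorm x ^ 2 * ‖uhat x‖ with hhdef
    have hgnn : ∀ x, 0 ≤ g x := fun x => by positivity
    have hhnn : ∀ x, 0 ≤ h x := fun x => by positivity
    -- bound on partial sums of g²
    have hgsum_bound : ∀ u : Finset (↥(↑(box N) : Set (Fin 3 → ℤ))ᶜ),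
        ∑ x ∈ u, g x ^ 2 ≤ 26 / (N:ℝ) := by
      intro u
      set v : Finset (Fin 3 → ℤ) := u.image Subtype.val with hvdef
      have hsum_eq : ∑ x ∈ u, g x ^ 2 = ∑ k ∈ v, ((knorm k ^ 2)⁻¹) ^ 2 := by
        rw [hvdef, Finset.sum_image (fun x _ y _ hxy => Subtype.ext hxy)]
      set M := N + v.sup (fun k => Finset.univ.sup fun i => (k i).natAbs) with hMdef
      have hMN : N ≤ M := Nat.le_add_right _ _
      have hv : v ⊆ box M \ box N := by
        intro k hk
        rw [Finset.mem_sdiff]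
        constructor
        · rw [mem_box]
          intro i
          have h1 : (k i).natAbs ≤ Finset.univ.sup (fun i => (k i).natAbs) :=
            Finset.le_sup (f := fun i => (k i).natAbs) (Finset.mem_univ i)
          have h2 : Finset.univ.sup (fun i => (k i).natAbs)
              ≤ v.sup (fun k => Finset.univ.sup fun i => (k i).natAbs) :=
            Finset.le_sup (f := fun k => Finset.univ.sup fun i => (k i).natAbs) hk
          have h3 : (k i).natAbs ≤ M := hMdef ▸ (h1.trans h2).trans (Nat.le_add_left _ _)
          calc |k i| = ((k i).natAbs : ℤ) := Int.abs_eq_natAbs _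
            _ ≤ (M:ℤ) := by exact_mod_cast h3
        · obtain ⟨x, hxu, rfl⟩ := Finset.mem_image.mp hk
          exact hxmem x
      calc ∑ x ∈ u, g x ^ 2 = ∑ k ∈ v, ((knorm k ^ 2)⁻¹) ^ 2 := hsum_eq
        _ ≤ ∑ k ∈ box M \ box N, ((knorm k ^ 2)⁻¹) ^ 2 :=
            Finset.sum_le_sum_of_subset_of_nonneg hv (fun _ _ _ => by positivity)
        _ ≤ 26 / (N:ℝ) - 26 / (M:ℝ) := sum_high N hN1 M hMN
        _ ≤ 26 / (N:ℝ) := by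
            have : (0:ℝ) ≤ 26 / (M:ℝ) := by positivity
            linarith
    have hgsq_sum : Summable fun x => g x ^ 2 :=
      summable_of_sum_le (fun x => sq_nonneg _) hgsum_bound
    have hgtsum : ∑' x, g x ^ 2 ≤ 26 / (N:ℝ) := Summable.tsum_le_of_sum_le hgsq_sum hgsum_bound
    -- bound for h²
    have hS2sub : Summable fun x : ↥(↑(box N) : Set (Fin 3 → ℤ))ᶜ =>
        (1 + knorm x ^ 4) * ‖uhat x‖ ^ 2 := hS2.subtype _
    have hhsq_le : ∀ x, h x ^ 2 ≤ (1 + knorm (x : _) ^ 4) * ‖uhat (x : _)‖ ^ 2 := by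
      intro x
      have : h x ^ 2 = knorm (x : _) ^ 4 * ‖uhat (x : _)‖ ^ 2 := by rw [hhdef]; ring
      rw [this]
      nlinarith [sq_nonneg ‖uhat (x : Fin 3 → ℤ)‖]
    have hhsq_sum : Summable fun x => h x ^ 2 :=
      Summable.of_nonneg_of_le (fun x => sq_nonneg _) hhsq_le hS2sub
    have hhtsum : ∑' x, h x ^ 2 ≤ T2 := by
      calc ∑' x, h x ^ 2 ≤ ∑' x : ↥(↑(box N) : Set (Fin 3 → ℤ))ᶜ,
            (1 + knorm x ^ 4) * ‖uhat x‖ ^ 2 := Summable.tsum_le_tsum hhsq_le hhsq_sum hS2sub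
        _ ≤ T2 := hT2def ▸ Summable.tsum_subtype_le _ _ (fun k => by positivity) hS2
    -- f = g * h on the complement
    have hfgh : ∀ x : ↥(↑(box N) : Set (Fin 3 → ℤ))ᶜ, ‖uhat x‖ = g x * h x := by
      intro x
      have h0 : knorm (x : Fin 3 → ℤ) ^ 2 ≠ 0 := ne_of_gt (knorm_sq_pos (hxmem x))
      rw [hgdef, hhdef]
      simp only
      rw [← mul_assoc, inv_mul_cancel₀ h0, one_mul]
    -- summability of f
    have hfC_sum : Summable fun x : ↥(↑(box N) : Set (Fin 3 → ℤ))ᶜ => ‖uhat x‖ := by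
      apply Summable.of_nonneg_of_le (fun x => norm_nonneg _) (fun x => ?_)
        ((hgsq_sum.add hhsq_sum).div_const 2)
      rw [hfgh x]
      nlinarith [sq_nonneg (g x - h x)]
    have hbox_sum : Summable fun x : (↑(box N) : Set (Fin 3 → ℤ)) => ‖uhat x‖ := by
      exact (box N).finite_toSet.summable fun k => ‖uhat k‖
    have hfsum : Summable fun k => ‖uhat k‖ :=
      summable_subtype_and_compl.mp ⟨hbox_sum, hfC_sum⟩
    have hsplit : ∑ k ∈ box N, ‖uhat k‖
        + ∑' x : ↥(↑(box N) : Set (Fin 3 → ℤ))ᶜ, ‖uhat x‖ = ∑' k, ‖uhat k‖ :=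
      Summable.sum_add_tsum_compl hfsum
    -- low frequencies
    have hlow : ∑ k ∈ box N, ‖uhat k‖ ≤ Real.sqrt (27 * (N:ℝ) * T1) := by
      set a : (Fin 3 → ℤ) → ℝ := fun k => Real.sqrt ((1 + knorm k ^ 2)⁻¹) with hadef
      set b : (Fin 3 → ℤ) → ℝ := fun k => Real.sqrt (1 + knorm k ^ 2) * ‖uhat k‖ with hbdef
      have hab : ∀ k, ‖uhat k‖ = a k * b k := by
        intro k
        have h0 : (0:ℝ) < 1 + knorm k ^ 2 := by positivity
        rw [hadef, hbdef]
        simp only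
        rw [← mul_assoc, ← Real.sqrt_mul (by positivity), inv_mul_cancel₀ (ne_of_gt h0),
          Real.sqrt_one, one_mul]
      have ha2 : ∀ k, a k ^ 2 = (1 + knorm k ^ 2)⁻¹ := fun k => Real.sq_sqrt (by positivity)
      have hb2 : ∀ k, b k ^ 2 = (1 + knorm k ^ 2) * ‖uhat k‖ ^ 2 := fun k => by
        rw [hbdef]; simp only; rw [mul_pow, Real.sq_sqrt (by positivity)]
      have hcs : (∑ k ∈ box N, a k * b k) ^ 2
          ≤ (∑ k ∈ box N, a k ^ 2) * (∑ k ∈ box N, b k ^ 2) :=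
        Finset.sum_mul_sq_le_sq_mul_sq _ a b
      have hsa : ∑ k ∈ box N, a k ^ 2 ≤ 27 * (N:ℝ) := by
        simp only [ha2]; exact sum_low N hN1
      have hsb : ∑ k ∈ box N, b k ^ 2 ≤ T1 := by
        simp only [hb2]
        exact hT1def ▸ Summable.sum_le_tsum _ (fun k _ => by positivity) hS1
      have hnn : 0 ≤ ∑ k ∈ box N, ‖uhat k‖ := Finset.sum_nonneg fun k _ => norm_nonneg _
      calc ∑ k ∈ box N, ‖uhat k‖
          = Real.sqrt ((∑ k ∈ box N, ‖uhat k‖) ^ 2) := (Real.sqrt_sq hnn).symm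
        _ ≤ Real.sqrt (27 * (N:ℝ) * T1) := by
            apply Real.sqrt_le_sqrt
            have he : (∑ k ∈ box N, ‖uhat k‖) = ∑ k ∈ box N, a k * b k :=
              Finset.sum_congr rfl fun k _ => hab k
            rw [he]
            calc (∑ k ∈ box N, a k * b k) ^ 2
                ≤ (∑ k ∈ box N, a k ^ 2) * (∑ k ∈ box N, b k ^ 2) := hcs
              _ ≤ 27 * (N:ℝ) * T1 := by
                  apply mul_le_mul hsa hsb (Finset.sum_nonneg fun k _ => sq_nonneg _)
                    (by positivity)
    -- high frequencies
    have hhigh : ∑' x : ↥(↑(box N) : Set (Fin 3 → ℤ))ᶜ, ‖uhat x‖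
        ≤ Real.sqrt (26 / (N:ℝ)) * B := by
      obtain ⟨hgh_sum, hgh_le⟩ := tsum_cs hgnn hhnn hgsq_sum hhsq_sum
      calc ∑' x : ↥(↑(box N) : Set (Fin 3 → ℤ))ᶜ, ‖uhat x‖
          = ∑' x, g x * h x := tsum_congr hfgh
        _ ≤ Real.sqrt (∑' x, g x ^ 2) * Real.sqrt (∑' x, h x ^ 2) := hgh_le
        _ ≤ Real.sqrt (26 / (N:ℝ)) * B := by
            apply mul_le_mul (Real.sqrt_le_sqrt hgtsum)
              (by rw [hBdef]; exact Real.sqrt_le_sqrt hhtsum)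
              (Real.sqrt_nonneg _) (Real.sqrt_nonneg _)
    -- numeric endgame
    have hterm1 : Real.sqrt (27 * (N:ℝ) * T1)
        ≤ Real.sqrt (27 * (1 + Real.sqrt 2)) * (Real.sqrt A * Real.sqrt B) := by
      have hkey : 27 * (N:ℝ) * T1 ≤ 27 * (1 + Real.sqrt 2) * (A * B) := by
        have h1 : 27 * (N:ℝ) * T1 ≤ 27 * ((1 + Real.sqrt 2) * (B / A)) * T1 := by
          apply mul_le_mul_of_nonneg_right _ hT1nn
          nlinarith
        have h2 : 27 * ((1 + Real.sqrt 2) * (B / A)) * T1 = 27 * (1 + Real.sqrt 2) * (A * B) := by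
          rw [← hA2]
          field_simp
        linarith
      calc Real.sqrt (27 * (N:ℝ) * T1) ≤ Real.sqrt (27 * (1 + Real.sqrt 2) * (A * B)) :=
            Real.sqrt_le_sqrt hkey
        _ = Real.sqrt (27 * (1 + Real.sqrt 2)) * (Real.sqrt A * Real.sqrt B) := by
            rw [Real.sqrt_mul (by positivity), Real.sqrt_mul hA.le]
    have hterm2 : Real.sqrt (26 / (N:ℝ)) * B
        ≤ Real.sqrt 26 * (Real.sqrt A * Real.sqrt B) := by
      have he : Real.sqrt (26 / (N:ℝ)) * B = Real.sqrt (26 / (N:ℝ) * T2) := by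
        rw [hBdef, Real.sqrt_mul (by positivity)]
      have hkey : 26 / (N:ℝ) * T2 ≤ 26 * (A * B) := by
        have h1 : 1 / (N:ℝ) ≤ A / B := by
          rw [div_le_div_iff₀ hNposR hB]
          have := (div_le_iff₀ hA).mp hNge
          nlinarith
        have h2 : 26 / (N:ℝ) * T2 ≤ 26 * (A / B) * T2 := by
          apply mul_le_mul_of_nonneg_right _ hT2nn
          calc 26 / (N:ℝ) = 26 * (1 / (N:ℝ)) := by ring
            _ ≤ 26 * (A / B) := by nlinarith
        have h3 : 26 * (A / B) * T2 = 26 * (A * B) := by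
          rw [← hB2]
          field_simp
        linarith
      rw [he]
      calc Real.sqrt (26 / (N:ℝ) * T2) ≤ Real.sqrt (26 * (A * B)) := Real.sqrt_le_sqrt hkey
        _ = Real.sqrt 26 * (Real.sqrt A * Real.sqrt B) := by
            rw [Real.sqrt_mul (by norm_num), Real.sqrt_mul hA.le]
    calc ∑' k, ‖uhat k‖
        = ∑ k ∈ box N, ‖uhat k‖ + ∑' x : ↥(↑(box N) : Set (Fin 3 → ℤ))ᶜ, ‖uhat x‖ :=
          hsplit.symm
      _ ≤ Real.sqrt (27 * (N:ℝ) * T1) + Real.sqrt (26 / (N:ℝ)) * B := add_le_add hlow hhigh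
      _ ≤ Real.sqrt (27 * (1 + Real.sqrt 2)) * (Real.sqrt A * Real.sqrt B)
          + Real.sqrt 26 * (Real.sqrt A * Real.sqrt B) := add_le_add hterm1 hterm2
      _ = (Real.sqrt (27 * (1 + Real.sqrt 2)) + Real.sqrt 26) * Real.sqrt A * Real.sqrt B := by
          ring
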